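/- arXiv:1910.05425 — 4 statements merged into one kernel-verified Lean document; each statement's English description precedes it below -/
import Mathlib

section
/- For p ≥ 1 and Borel probability measures μ and ν on ℝ with finite p-th moments, the p-Wasserstein distance has the closed-form expression W_p(μ, ν)^p = ∫₀¹ |F_μ^{-1}(t) − F_ν^{-1}(t)|^p dt, where F_μ^{-1} and F_ν^{-1} are the (generalized) inverse cumulative distribution functions (quantile functions) of μ and ν. -/
open MeasureTheory Measure Set

noncomputable section

/-- `γ` is a coupling of `μ` and `ν`. -/
def IsCoupling {X Y : Type*} [MeasurableSpace X] [MeasurableSpace Y]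
    (γ : Measure (X × Y)) (μ : Measure X) (ν : Measure Y) : Prop :=
  γ.map Prod.fst = μ ∧ γ.map Prod.snd = ν

/-- The `p`-Wasserstein distance associated to the cost `d`. -/
def wassersteinDist {X : Type*} [MeasurableSpace X] (d : X → X → ℝ) (p : ℝ)
    (μ ν : Measure X) : ℝ :=
  (sInf { c : ℝ | ∃ γ : Measure (X × X), IsProbabilityMeasure γ ∧ IsCoupling γ μ ν ∧
      c = ∫ z, d z.1 z.2 ^ p ∂γ }) ^ (1 / p)

/-- The cumulative distribution function of a Borel measure on `ℝ`. -/
def cdf (μ : Measure ℝ) (x : ℝ) : ℝ := (μ (Iic x)).toReal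

/-- The generalized inverse cumulative distribution function (quantile function). -/
def quantile (μ : Measure ℝ) (t : ℝ) : ℝ := sInf { x : ℝ | t ≤ cdf μ x }

open Filter Topology
open scoped ENNReal

namespace WassAux
variable {μ : Measure ℝ} [IsProbabilityMeasure μ]

lemma ofReal_cdf (μ : Measure ℝ) [IsProbabilityMeasure μ] (x : ℝ) :
    ENNReal.ofReal (cdf μ x) = μ (Iic x) :=
  ENNReal.ofReal_toReal (measure_ne_top μ _)

lemma cdf_nonneg (μ : Measure ℝ) (x : ℝ) : 0 ≤ cdf μ x := ENNReal.toReal_nonneg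

lemma cdf_le_one (μ : Measure ℝ) [IsProbabilityMeasure μ] (x : ℝ) : cdf μ x ≤ 1 := by
  have h := prob_le_one (μ := μ) (s := Iic x)
  have := ENNReal.toReal_mono (by simp) h
  simpa [cdf] using this

lemma cdf_mono (μ : Measure ℝ) [IsProbabilityMeasure μ] : Monotone (cdf μ) := by
  intro a b hab
  exact ENNReal.toReal_mono (measure_ne_top μ _) (measure_mono (Iic_subset_Iic.2 hab))

lemma le_cdf_of_forall {t x : ℝ} (h : ∀ ε > (0:ℝ), t ≤ cdf μ (x + ε)) : t ≤ cdf μ x := by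
  have hseq : Tendsto (fun n : ℕ => μ (Iic (x + 1/(n+1)))) atTop (𝓝 (μ (⋂ n : ℕ, Iic (x + 1/(n+1))))) := by
    apply tendsto_measure_iInter_atTop (fun n => (measurableSet_Iic).nullMeasurableSet)
    · intro m n hmn
      apply Iic_subset_Iic.2
      have hc : (m:ℝ) ≤ n := Nat.cast_le.2 hmn
      have : (1:ℝ)/(n+1) ≤ 1/(m+1) := one_div_le_one_div_of_le (by positivity) (by linarith)
      linarith
    · exact ⟨0, measure_ne_top μ _⟩
  have hint : (⋂ n : ℕ, Iic (x + 1/(n+1))) = Iic x := by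
    ext y
    simp only [mem_iInter, mem_Iic]
    constructor
    · intro hy
      by_contra hxy
      push_neg at hxy
      obtain ⟨n, hn⟩ := exists_nat_one_div_lt (show 0 < y - x by linarith)
      exact absurd (hy n) (by push_neg; linarith)
    · intro hy n; have : (0:ℝ) < 1/(n+1) := by positivity
      linarith
  rw [hint] at hseq
  have hseq' : Tendsto (fun n : ℕ => cdf μ (x + 1/(n+1))) atTop (𝓝 (cdf μ x)) :=
    (ENNReal.tendsto_toReal (measure_ne_top μ _)).comp hseq
  exact ge_of_tendsto hseq' (Filter.Eventually.of_forall fun n => h _ (by positivity))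


lemma exists_le_cdf {t : ℝ} (ht1 : t < 1) : ∃ x, t ≤ cdf μ x := by
  have h := tendsto_measure_Iic_atTop (μ := μ)
  rw [measure_univ] at h
  have h' : Tendsto (fun x => cdf μ x) atTop (𝓝 1) := by
    have := (ENNReal.tendsto_toReal (by simp)).comp h
    simpa [cdf, Function.comp_def] using this
  obtain ⟨x, hx⟩ := (h'.eventually_const_lt ht1).exists
  exact ⟨x, hx.le⟩

lemma exists_cdf_lt {t : ℝ} (ht : 0 < t) : ∃ x, cdf μ x < t := by
  have h := tendsto_measure_Ici_atBot (μ := μ)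
  rw [measure_univ] at h
  have h' : Tendsto (fun x => (μ (Ici x)).toReal) atBot (𝓝 1) := by
    have := (ENNReal.tendsto_toReal (by simp)).comp h
    simpa [Function.comp_def] using this
  have h2 : ∀ x : ℝ, cdf μ x ≤ 1 - (μ (Ici (x+1))).toReal := by
    intro x
    have hdisj : Disjoint (Iic x) (Ici (x+1)) := by
      apply Iic_disjoint_Ici.2; norm_num
    have : μ (Iic x) + μ (Ici (x+1)) ≤ 1 := by
      rw [← measure_univ (μ := μ), ← measure_union hdisj measurableSet_Ici]
      exact measure_mono (subset_univ _)
    have hfin : μ (Iic x) ≠ ⊤ := measure_ne_top μ _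
    have hfin2 : μ (Ici (x+1)) ≠ ⊤ := measure_ne_top μ _
    have := ENNReal.toReal_mono (by simp) this
    rw [ENNReal.toReal_add hfin hfin2] at this
    simp only [ENNReal.toReal_one] at this
    simp only [cdf]; linarith
  obtain ⟨x, hx⟩ := (h'.eventually_const_lt (show 1 - t < 1 by linarith)).exists
  refine ⟨x - 1, lt_of_le_of_lt (h2 (x-1)) ?_⟩
  have : (x - 1) + 1 = x := by ring
  rw [this]; linarith

section Quantile
variable {μ : Measure ℝ} [IsProbabilityMeasure μ]

lemma qset_nonempty {t : ℝ} (ht1 : t < 1) : { x : ℝ | t ≤ cdf μ x }.Nonempty :=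
  exists_le_cdf ht1

lemma qset_bddBelow {t : ℝ} (ht : 0 < t) : BddBelow { x : ℝ | t ≤ cdf μ x } := by
  obtain ⟨x0, hx0⟩ := exists_cdf_lt (μ := μ) ht
  refine ⟨x0, fun y hy => ?_⟩
  by_contra hxy
  push_neg at hxy
  exact absurd (le_trans hy (cdf_mono μ hxy.le)) (not_le.2 hx0)

lemma quantile_le_iff {t x : ℝ} (ht : 0 < t) (ht1 : t < 1) :
    quantile μ t ≤ x ↔ t ≤ cdf μ x := by
  constructor
  · intro h
    apply le_cdf_of_forall
    intro ε hε
    have hlt : sInf { x : ℝ | t ≤ cdf μ x } < x + ε := lt_of_le_of_lt h (by linarith)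
    obtain ⟨y, hy, hyx⟩ := (csInf_lt_iff (qset_bddBelow ht) (qset_nonempty ht1)).1 hlt
    exact le_trans hy (cdf_mono μ hyx.le)
  · intro h
    exact csInf_le (qset_bddBelow ht) h

lemma lt_quantile_iff {t x : ℝ} (ht : 0 < t) (ht1 : t < 1) :
    x < quantile μ t ↔ cdf μ x < t := by
  rw [← not_le, ← not_le, quantile_le_iff ht ht1]

/-- globally measurable version of the quantile function. -/
def Q (μ : Measure ℝ) : ℝ → ℝ := (Ioo (0:ℝ) 1).piecewise (quantile μ) 0

lemma Q_eq_on {t : ℝ} (ht : t ∈ Ioo (0:ℝ) 1) : Q μ t = quantile μ t :=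
  Set.piecewise_eq_of_mem _ _ _ ht

lemma measurable_Q (μ : Measure ℝ) [IsProbabilityMeasure μ] : Measurable (Q μ) := by
  apply measurable_of_Iic
  intro x
  have : Q μ ⁻¹' Iic x =
      (Ioo (0:ℝ) 1 ∩ Iic (cdf μ x)) ∪ ((Ioo (0:ℝ) 1)ᶜ ∩ (if (0:ℝ) ≤ x then univ else ∅)) := by
    ext t
    by_cases ht : t ∈ Ioo (0:ℝ) 1
    · simp only [mem_preimage, Q, Set.piecewise_eq_of_mem _ _ _ ht, mem_Iic, mem_union,
        mem_inter_iff, ht, true_and, mem_compl_iff, not_true, false_and, or_false]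
      exact quantile_le_iff ht.1 ht.2
    · simp only [mem_preimage, Q, Set.piecewise_eq_of_notMem _ _ _ ht, mem_Iic, mem_union,
        mem_inter_iff, ht, false_and, false_or, mem_compl_iff, not_false_iff, true_and,
        Pi.zero_apply]
      by_cases hx : (0:ℝ) ≤ x <;> simp [hx]
  rw [this]
  measurability

lemma monotoneOn_quantile : MonotoneOn (quantile μ) (Ioo (0:ℝ) 1) := by
  intro a ha b hb hab
  exact le_csInf (qset_nonempty hb.2) fun y hy =>
    csInf_le (qset_bddBelow ha.1) (le_trans hab hy)

end Quantile


section Sampling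
variable {μ ν : Measure ℝ} [IsProbabilityMeasure μ] [IsProbabilityMeasure ν]

lemma vol_Ioo_inter_Ioc {a b : ℝ} (ha : 0 ≤ a) (hb : b ≤ 1) :
    volume (Ioo (0:ℝ) 1 ∩ Ioc a b) = ENNReal.ofReal (b - a) := by
  apply le_antisymm
  · calc volume (Ioo (0:ℝ) 1 ∩ Ioc a b) ≤ volume (Ioc a b) :=
        measure_mono inter_subset_right
      _ = ENNReal.ofReal (b - a) := Real.volume_Ioc
  · calc ENNReal.ofReal (b - a) = volume (Ioo a b) := Real.volume_Ioo.symm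
      _ ≤ volume (Ioo (0:ℝ) 1 ∩ Ioc a b) := by
          apply measure_mono
          intro t ht
          exact ⟨⟨lt_of_le_of_lt ha ht.1, lt_of_lt_of_le ht.2 hb⟩, ht.1, ht.2.le⟩

instance : IsProbabilityMeasure (volume.restrict (Ioo (0:ℝ) 1)) := by
  constructor
  rw [Measure.restrict_apply_univ, Real.volume_Ioo]
  norm_num

lemma map_Q_eq (μ : Measure ℝ) [IsProbabilityMeasure μ] :
    (volume.restrict (Ioo (0:ℝ) 1)).map (Q μ) = μ := by
  apply Measure.ext_of_Iic
  intro x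
  rw [Measure.map_apply (measurable_Q μ) measurableSet_Iic,
    Measure.restrict_apply (measurable_Q μ measurableSet_Iic)]
  have : Q μ ⁻¹' Iic x ∩ Ioo 0 1 = Ioo (0:ℝ) 1 ∩ Ioc 0 (cdf μ x) := by
    ext t
    simp only [mem_inter_iff, mem_preimage, mem_Iic, mem_Ioc, and_comm (b := t ∈ Ioo (0:ℝ) 1)]
    refine and_congr_right fun ht => ?_
    rw [Q_eq_on ht, quantile_le_iff ht.1 ht.2]
    exact ⟨fun h => ⟨ht.1, h⟩, fun h => h.2⟩
  rw [this, vol_Ioo_inter_Ioc le_rfl (cdf_le_one μ x)]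
  simpa using ofReal_cdf μ x

end Sampling

section Gstar
variable (μ ν : Measure ℝ) [IsProbabilityMeasure μ] [IsProbabilityMeasure ν]

def T : ℝ → ℝ × ℝ := fun t => (Q μ t, Q ν t)

lemma measurable_T : Measurable (T μ ν) :=
  (measurable_Q μ).prodMk (measurable_Q ν)

def gstar : Measure (ℝ × ℝ) := (volume.restrict (Ioo (0:ℝ) 1)).map (T μ ν)

instance : IsProbabilityMeasure (gstar μ ν) :=
  isProbabilityMeasure_map (measurable_T μ ν).aemeasurable

lemma isCoupling_gstar : (gstar μ ν).map Prod.fst = μ ∧ (gstar μ ν).map Prod.snd = ν := by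
  constructor
  · rw [gstar, Measure.map_map measurable_fst (measurable_T μ ν)]
    exact map_Q_eq μ
  · rw [gstar, Measure.map_map measurable_snd (measurable_T μ ν)]
    exact map_Q_eq ν

end Gstar

section Slice

lemma slice_set_measurable (s u : ℝ) :
    MeasurableSet {z : ℝ × ℝ | u < z.1 ∧ z.2 ≤ u - s} := by
  rw [Set.setOf_and]
  exact (measurableSet_lt measurable_const measurable_fst).inter
    (measurableSet_le measurable_snd measurable_const)

lemma slice_integral (γ : Measure (ℝ × ℝ)) [IsProbabilityMeasure γ] (s : ℝ) :
    ∫⁻ z, ENNReal.ofReal (z.1 - z.2 - s) ∂γ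
      = ∫⁻ u, γ {z : ℝ × ℝ | u < z.1 ∧ z.2 ≤ u - s} ∂volume := by
  set S : (ℝ × ℝ) × ℝ → ℝ≥0∞ :=
    fun w => Set.indicator {w : (ℝ × ℝ) × ℝ | w.1.2 + s ≤ w.2 ∧ w.2 < w.1.1}
      (fun _ => (1:ℝ≥0∞)) w with hS
  have hSmeas : Measurable S := by
    apply Measurable.indicator measurable_const
    rw [Set.setOf_and]
    exact (measurableSet_le (measurable_fst.snd.add measurable_const) measurable_snd).inter
      (measurableSet_lt measurable_snd measurable_fst.fst)
  have h1 : ∀ z : ℝ × ℝ, ENNReal.ofReal (z.1 - z.2 - s)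
      = ∫⁻ u, S (z, u) ∂volume := by
    intro z
    have : (fun u => S (z, u))
        = Set.indicator (Ico (z.2 + s) z.1) (fun _ => (1:ℝ≥0∞)) := by
      funext u
      simp only [hS, Set.indicator_apply, mem_Ico, mem_setOf_eq]
    rw [this, lintegral_indicator_const measurableSet_Ico, Real.volume_Ico, one_mul]
    ring_nf
  calc ∫⁻ z, ENNReal.ofReal (z.1 - z.2 - s) ∂γ
      = ∫⁻ z, ∫⁻ u, S (z, u) ∂volume ∂γ := by
        apply lintegral_congr h1
    _ = ∫⁻ u, ∫⁻ z, S (z, u) ∂γ ∂volume := by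
        exact lintegral_lintegral_swap hSmeas.aemeasurable
    _ = ∫⁻ u, γ {z : ℝ × ℝ | u < z.1 ∧ z.2 ≤ u - s} ∂volume := by
        apply lintegral_congr
        intro u
        have : (fun z : ℝ × ℝ => S (z, u))
            = Set.indicator {z : ℝ × ℝ | u < z.1 ∧ z.2 ≤ u - s} (fun _ => (1:ℝ≥0∞)) := by
          funext z
          simp only [hS, Set.indicator_apply, mem_setOf_eq]
          congr 1
          simp only [eq_iff_iff]
          rw [le_sub_iff_add_le, and_comm]
        rw [this, lintegral_indicator_const (slice_set_measurable s u), one_mul]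

end Slice

section SliceBounds
variable {μ ν : Measure ℝ} [IsProbabilityMeasure μ] [IsProbabilityMeasure ν]

lemma slice_lower (γ : Measure (ℝ × ℝ)) [IsProbabilityMeasure γ]
    (h1 : γ.map Prod.fst = μ) (h2 : γ.map Prod.snd = ν) (s u : ℝ) :
    ν (Iic (u - s)) - μ (Iic u) ≤ γ {z : ℝ × ℝ | u < z.1 ∧ z.2 ≤ u - s} := by
  have hA : γ {z : ℝ × ℝ | u < z.1} = μ (Ioi u) := by
    rw [← h1, Measure.map_apply measurable_fst measurableSet_Ioi]
    rfl
  have hB : γ {z : ℝ × ℝ | u - s < z.2} = ν (Ioi (u - s)) := by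
    rw [← h2, Measure.map_apply measurable_snd measurableSet_Ioi]
    rfl
  have hsub : {z : ℝ × ℝ | u < z.1}
      ⊆ {z : ℝ × ℝ | u < z.1 ∧ z.2 ≤ u - s} ∪ {z : ℝ × ℝ | u - s < z.2} := by
    intro z hz
    by_cases h : z.2 ≤ u - s
    · exact Or.inl ⟨hz, h⟩
    · exact Or.inr (not_le.1 h)
  have hkey : μ (Ioi u) ≤ γ {z : ℝ × ℝ | u < z.1 ∧ z.2 ≤ u - s} + ν (Ioi (u - s)) := by
    rw [← hA, ← hB]
    exact le_trans (measure_mono hsub) (measure_union_le _ _)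
  rw [tsub_le_iff_right]
  have hν : ν (Iic (u - s)) + ν (Ioi (u - s)) = 1 := by
    have := measure_add_measure_compl (μ := ν) (measurableSet_Iic (a := u - s))
    rwa [compl_Iic, measure_univ] at this
  have hμ : μ (Iic u) + μ (Ioi u) = 1 := by
    have := measure_add_measure_compl (μ := μ) (measurableSet_Iic (a := u))
    rwa [compl_Iic, measure_univ] at this
  have := add_le_add (le_refl (ν (Iic (u - s)))) hkey
  rw [← add_assoc, add_comm (ν (Iic (u-s))) (γ _)] at this
  rw [add_assoc, hν] at this
  have h1' : ν (Iic (u - s)) + μ (Ioi u)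
      ≤ (γ {z : ℝ × ℝ | u < z.1 ∧ z.2 ≤ u - s} + μ (Iic u)) + μ (Ioi u) := by
    calc ν (Iic (u - s)) + μ (Ioi u) ≤ γ {z : ℝ × ℝ | u < z.1 ∧ z.2 ≤ u - s} + 1 := this
      _ = (γ {z : ℝ × ℝ | u < z.1 ∧ z.2 ≤ u - s} + μ (Iic u)) + μ (Ioi u) := by
          rw [add_assoc, hμ]
  exact (ENNReal.add_le_add_iff_right (measure_ne_top μ _)).1 h1'
end SliceBounds

section SliceStar
variable (μ ν : Measure ℝ) [IsProbabilityMeasure μ] [IsProbabilityMeasure ν]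

lemma slice_gstar (s u : ℝ) :
    gstar μ ν {z : ℝ × ℝ | u < z.1 ∧ z.2 ≤ u - s} = ν (Iic (u - s)) - μ (Iic u) := by
  rw [gstar, Measure.map_apply (measurable_T μ ν) (slice_set_measurable s u),
    Measure.restrict_apply (measurable_T μ ν (slice_set_measurable s u))]
  have hset : T μ ν ⁻¹' {z : ℝ × ℝ | u < z.1 ∧ z.2 ≤ u - s} ∩ Ioo 0 1
      = Ioo (0:ℝ) 1 ∩ Ioc (cdf μ u) (cdf ν (u - s)) := by
    ext t
    simp only [mem_inter_iff, mem_preimage, mem_setOf_eq, T, mem_Ioc,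
      and_comm (b := t ∈ Ioo (0:ℝ) 1)]
    refine and_congr_right fun ht => ?_
    rw [Q_eq_on ht, Q_eq_on ht]
    constructor
    · rintro ⟨h1, h2⟩
      refine ⟨?_, (quantile_le_iff ht.1 ht.2).1 h2⟩
      by_contra hc
      push_neg at hc
      exact absurd ((quantile_le_iff ht.1 ht.2).2 hc) (not_le.2 h1)
    · rintro ⟨h1, h2⟩
      refine ⟨?_, (quantile_le_iff ht.1 ht.2).2 h2⟩
      by_contra hc
      push_neg at hc
      exact absurd ((quantile_le_iff ht.1 ht.2).1 hc) (not_le.2 h1)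
  rw [hset, vol_Ioo_inter_Ioc (cdf_nonneg μ u) (cdf_le_one ν (u - s)),
    ← ofReal_cdf ν (u - s), ← ofReal_cdf μ u, ENNReal.ofReal_sub _ (cdf_nonneg μ u)]
end SliceStar

section Compare
variable {μ ν : Measure ℝ} [IsProbabilityMeasure μ] [IsProbabilityMeasure ν]

lemma A_ge (γ : Measure (ℝ × ℝ)) [IsProbabilityMeasure γ]
    (h1 : γ.map Prod.fst = μ) (h2 : γ.map Prod.snd = ν) (s : ℝ) :
    ∫⁻ z, ENNReal.ofReal (z.1 - z.2 - s) ∂(gstar μ ν)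
      ≤ ∫⁻ z, ENNReal.ofReal (z.1 - z.2 - s) ∂γ := by
  rw [slice_integral, slice_integral]
  apply lintegral_mono
  intro u
  show gstar μ ν _ ≤ γ _
  rw [slice_gstar]
  exact slice_lower γ h1 h2 s u

lemma lintegral_swap_eq (ρ : Measure (ℝ × ℝ)) (s : ℝ) :
    ∫⁻ z, ENNReal.ofReal (z.2 - z.1 - s) ∂ρ
      = ∫⁻ z, ENNReal.ofReal (z.1 - z.2 - s) ∂(ρ.map Prod.swap) := by
  rw [lintegral_map (by fun_prop) measurable_swap]
  rfl

lemma map_swap_coupling (γ : Measure (ℝ × ℝ)) [IsProbabilityMeasure γ]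
    (h1 : γ.map Prod.fst = μ) (h2 : γ.map Prod.snd = ν) :
    (γ.map Prod.swap).map Prod.fst = ν ∧ (γ.map Prod.swap).map Prod.snd = μ := by
  rw [Measure.map_map measurable_fst measurable_swap,
    Measure.map_map measurable_snd measurable_swap]
  exact ⟨h2, h1⟩

lemma gstar_swap : (gstar μ ν).map Prod.swap = gstar ν μ := by
  rw [gstar, gstar, Measure.map_map measurable_swap (measurable_T μ ν)]
  rfl

lemma B_ge (γ : Measure (ℝ × ℝ)) [IsProbabilityMeasure γ]
    (h1 : γ.map Prod.fst = μ) (h2 : γ.map Prod.snd = ν) (s : ℝ) :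
    ∫⁻ z, ENNReal.ofReal (z.2 - z.1 - s) ∂(gstar μ ν)
      ≤ ∫⁻ z, ENNReal.ofReal (z.2 - z.1 - s) ∂γ := by
  rw [lintegral_swap_eq, lintegral_swap_eq, gstar_swap]
  have : IsProbabilityMeasure (γ.map Prod.swap) :=
    isProbabilityMeasure_map measurable_swap.aemeasurable
  exact A_ge (γ.map Prod.swap) (map_swap_coupling γ h1 h2).1 (map_swap_coupling γ h1 h2).2 s
end Compare

section Rep

lemma rep_pos {p : ℝ} (hp : 1 < p) {v : ℝ} (hv : 0 ≤ v) :
    ∫⁻ s in Ioi (0:ℝ), ENNReal.ofReal (p * (p-1) * s ^ (p-2)) * ENNReal.ofReal (v - s)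
      = ENNReal.ofReal (v ^ p) := by
  have hp0 : (0:ℝ) < p := by linarith
  have hp1 : (0:ℝ) < p - 1 := by linarith
  rcases eq_or_lt_of_le hv with hv0 | hv0
  · rw [← hv0, Real.zero_rpow (by linarith : p ≠ 0), ENNReal.ofReal_zero]
    rw [← lintegral_zero (μ := volume.restrict (Ioi (0:ℝ)))]
    apply setLIntegral_congr_fun measurableSet_Ioi
    intro s hs
    beta_reduce
    rw [show ENNReal.ofReal (0 - s) = 0 from ENNReal.ofReal_of_nonpos (by linarith [hs.out]),
      mul_zero]
  -- v > 0
  have hIoo : ∫⁻ s in Ioi (0:ℝ), ENNReal.ofReal (p * (p-1) * s ^ (p-2)) * ENNReal.ofReal (v - s)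
      = ∫⁻ s in Ioo (0:ℝ) v, ENNReal.ofReal (p * (p-1) * s ^ (p-2)) * ENNReal.ofReal (v - s) := by
    rw [← lintegral_indicator measurableSet_Ioi, ← lintegral_indicator measurableSet_Ioo]
    congr 1
    funext s
    by_cases h1 : s ∈ Ioo (0:ℝ) v
    · rw [Set.indicator_of_mem h1, Set.indicator_of_mem (mem_Ioi.2 h1.1)]
    · by_cases h2 : s ∈ Ioi (0:ℝ)
      · rw [Set.indicator_of_mem h2, Set.indicator_of_notMem h1]
        have hsv : v ≤ s := by
          by_contra hc
          exact h1 ⟨h2, not_le.1 hc⟩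
        rw [show ENNReal.ofReal (v - s) = 0 from ENNReal.ofReal_of_nonpos (by linarith),
          mul_zero]
      · rw [Set.indicator_of_notMem h1, Set.indicator_of_notMem h2]
  rw [hIoo]
  set g : ℝ → ℝ := fun s => p * (p-1) * (v * s ^ (p-2)) - p * (p-1) * (s ^ (p-1)) with hg
  have hEq : ∀ s ∈ Ioo (0:ℝ) v,
      ENNReal.ofReal (p * (p-1) * s ^ (p-2)) * ENNReal.ofReal (v - s) = ENNReal.ofReal (g s) := by
    intro s hs
    rw [← ENNReal.ofReal_mul (mul_nonneg (by positivity) (Real.rpow_nonneg hs.1.le _))]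
    congr 1
    have : s ^ (p-2) * s = s ^ (p-1) := by
      rw [← Real.rpow_add_one (ne_of_gt hs.1)]
      ring_nf
    rw [hg]
    simp only
    rw [← this]
    ring
  have hInt2 : IntegrableOn (fun s : ℝ => s ^ (p-2)) (Ioo (0:ℝ) v) volume := by
    have := (intervalIntegral.intervalIntegrable_rpow' (show (-1:ℝ) < p - 2 by linarith)
      (a := 0) (b := v))
    rw [intervalIntegrable_iff_integrableOn_Ioo_of_le hv] at this
    exact this
  have hInt1 : IntegrableOn (fun s : ℝ => s ^ (p-1)) (Ioo (0:ℝ) v) volume := by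
    have := (intervalIntegral.intervalIntegrable_rpow' (show (-1:ℝ) < p - 1 by linarith)
      (a := 0) (b := v))
    rw [intervalIntegrable_iff_integrableOn_Ioo_of_le hv] at this
    exact this
  have hgInt : IntegrableOn g (Ioo (0:ℝ) v) volume := by
    apply Integrable.sub
    · exact ((hInt2.const_mul v).const_mul (p * (p-1)))
    · exact hInt1.const_mul (p * (p-1))
  have hgNonneg : 0 ≤ᵐ[volume.restrict (Ioo (0:ℝ) v)] g := by
    rw [Filter.EventuallyLE, ae_restrict_iff' measurableSet_Ioo]
    apply Filter.Eventually.of_forall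
    intro s hs
    have h1 : s ^ (p-2) * s = s ^ (p-1) := by
      rw [← Real.rpow_add_one (ne_of_gt hs.1)]
      ring_nf
    have h2 : (0:ℝ) ≤ s ^ (p-2) := Real.rpow_nonneg hs.1.le _
    simp only [hg, Pi.zero_apply]
    rw [← h1]
    nlinarith [mul_nonneg (mul_nonneg (mul_nonneg hp0.le hp1.le) h2)
      (sub_nonneg.2 hs.2.le)]
  calc ∫⁻ s in Ioo (0:ℝ) v, ENNReal.ofReal (p * (p-1) * s ^ (p-2)) * ENNReal.ofReal (v - s)
      = ∫⁻ s in Ioo (0:ℝ) v, ENNReal.ofReal (g s) := by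
        apply setLIntegral_congr_fun measurableSet_Ioo
        exact hEq
    _ = ENNReal.ofReal (∫ s in Ioo (0:ℝ) v, g s) :=
        (ofReal_integral_eq_lintegral_ofReal hgInt hgNonneg).symm
    _ = ENNReal.ofReal (v ^ p) := by
        congr 1
        rw [← integral_Ioc_eq_integral_Ioo, ← intervalIntegral.integral_of_le hv]
        have e2 : ∫ s in (0:ℝ)..v, p * (p-1) * (v * s ^ (p-2)) = p * v ^ (p-1) * v := by
          rw [intervalIntegral.integral_const_mul, intervalIntegral.integral_const_mul,
            integral_rpow (Or.inl (by linarith))]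
          rw [Real.zero_rpow (by linarith : p - 2 + 1 ≠ 0)]
          have : p - 2 + 1 = p - 1 := by ring
          rw [this]
          field_simp
          ring
        have e1 : ∫ s in (0:ℝ)..v, p * (p-1) * s ^ (p-1) = (p-1) * v ^ p := by
          rw [intervalIntegral.integral_const_mul, integral_rpow (Or.inl (by linarith))]
          rw [Real.zero_rpow (by linarith : p - 1 + 1 ≠ 0)]
          have : p - 1 + 1 = p := by ring
          rw [this]
          field_simp
          ring
        rw [hg, intervalIntegral.integral_sub, e1, e2]
        · have : v ^ (p-1) * v = v ^ p := by
            rw [← Real.rpow_add_one (ne_of_gt hv0)]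
            ring_nf
          rw [mul_assoc, this]
          ring
        · rw [intervalIntegrable_iff_integrableOn_Ioo_of_le hv]
          exact (hInt2.const_mul v).const_mul (p * (p-1))
        · rw [intervalIntegrable_iff_integrableOn_Ioo_of_le hv]
          exact hInt1.const_mul (p * (p-1))
end Rep

section RepFull

lemma rep_neg {p : ℝ} (hp : 1 < p) {v : ℝ} (hv : v ≤ 0) :
    ∫⁻ s in Ioi (0:ℝ), ENNReal.ofReal (p * (p-1) * s ^ (p-2)) * ENNReal.ofReal (v - s) = 0 := by
  rw [← lintegral_zero (μ := volume.restrict (Ioi (0:ℝ)))]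
  apply setLIntegral_congr_fun measurableSet_Ioi
  intro s hs
  beta_reduce
  rw [show ENNReal.ofReal (v - s) = 0 from ENNReal.ofReal_of_nonpos (by linarith [hs.out]),
    mul_zero]

lemma w_measurable (p : ℝ) : Measurable (fun s : ℝ => ENNReal.ofReal (p * (p-1) * s ^ (p-2))) :=
  (measurable_const.mul (measurable_id.pow_const _)).ennreal_ofReal

lemma rep {p : ℝ} (hp : 1 < p) (v : ℝ) :
    ∫⁻ s in Ioi (0:ℝ), ENNReal.ofReal (p * (p-1) * s ^ (p-2)) *
        (ENNReal.ofReal (v - s) + ENNReal.ofReal (-v - s))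
      = ENNReal.ofReal (|v| ^ p) := by
  have hsplit : ∫⁻ s in Ioi (0:ℝ), ENNReal.ofReal (p * (p-1) * s ^ (p-2)) *
        (ENNReal.ofReal (v - s) + ENNReal.ofReal (-v - s))
      = (∫⁻ s in Ioi (0:ℝ), ENNReal.ofReal (p * (p-1) * s ^ (p-2)) * ENNReal.ofReal (v - s))
        + ∫⁻ s in Ioi (0:ℝ), ENNReal.ofReal (p * (p-1) * s ^ (p-2)) * ENNReal.ofReal (-v - s) := by
    rw [← lintegral_add_left]
    · apply lintegral_congr
      intro s
      rw [mul_add]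
    · exact (w_measurable p).mul ((measurable_const.sub measurable_id).ennreal_ofReal)
  rw [hsplit]
  rcases le_or_gt 0 v with hv | hv
  · rw [rep_pos hp hv, rep_neg hp (by linarith), add_zero, abs_of_nonneg hv]
  · rw [rep_pos hp (by linarith : (0:ℝ) ≤ -v), rep_neg hp hv.le, zero_add, abs_of_neg hv]

end RepFull

section LCompare
variable {μ ν : Measure ℝ} [IsProbabilityMeasure μ] [IsProbabilityMeasure ν]

lemma inner_measurable (s : ℝ) :
    Measurable (fun z : ℝ × ℝ => ENNReal.ofReal (z.1 - z.2 - s)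
      + ENNReal.ofReal (z.2 - z.1 - s)) :=
  (((measurable_fst.sub measurable_snd).sub measurable_const).ennreal_ofReal).add
    (((measurable_snd.sub measurable_fst).sub measurable_const).ennreal_ofReal)

lemma L_ge {p : ℝ} (hp : 1 ≤ p) (γ : Measure (ℝ × ℝ)) [IsProbabilityMeasure γ]
    (h1 : γ.map Prod.fst = μ) (h2 : γ.map Prod.snd = ν) :
    ∫⁻ z, ENNReal.ofReal (|z.1 - z.2| ^ p) ∂(gstar μ ν)
      ≤ ∫⁻ z, ENNReal.ofReal (|z.1 - z.2| ^ p) ∂γ := by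
  rcases eq_or_lt_of_le hp with hp1 | hp1
  · -- p = 1
    have habs : ∀ z : ℝ × ℝ, ENNReal.ofReal (|z.1 - z.2| ^ p)
        = ENNReal.ofReal (z.1 - z.2 - 0) + ENNReal.ofReal (z.2 - z.1 - 0) := by
      intro z
      rw [← hp1, Real.rpow_one, sub_zero, sub_zero]
      rcases le_or_gt 0 (z.1 - z.2) with h | h
      · rw [abs_of_nonneg h, show ENNReal.ofReal (z.2 - z.1) = 0 from
          ENNReal.ofReal_of_nonpos (by linarith), add_zero]
      · rw [abs_of_neg h, show ENNReal.ofReal (z.1 - z.2) = 0 from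
          ENNReal.ofReal_of_nonpos (by linarith), zero_add, neg_sub]
    calc ∫⁻ z, ENNReal.ofReal (|z.1 - z.2| ^ p) ∂(gstar μ ν)
        = (∫⁻ z, ENNReal.ofReal (z.1 - z.2 - 0) ∂(gstar μ ν))
          + ∫⁻ z, ENNReal.ofReal (z.2 - z.1 - 0) ∂(gstar μ ν) := by
          rw [← lintegral_add_left (by fun_prop)]
          exact lintegral_congr habs
      _ ≤ (∫⁻ z, ENNReal.ofReal (z.1 - z.2 - 0) ∂γ)
          + ∫⁻ z, ENNReal.ofReal (z.2 - z.1 - 0) ∂γ :=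
          add_le_add (A_ge γ h1 h2 0) (B_ge γ h1 h2 0)
      _ = ∫⁻ z, ENNReal.ofReal (|z.1 - z.2| ^ p) ∂γ := by
          rw [← lintegral_add_left (by fun_prop)]
          exact (lintegral_congr habs).symm
  · -- p > 1
    have hrep : ∀ z : ℝ × ℝ, ENNReal.ofReal (|z.1 - z.2| ^ p)
        = ∫⁻ s in Ioi (0:ℝ), ENNReal.ofReal (p * (p-1) * s ^ (p-2)) *
            (ENNReal.ofReal (z.1 - z.2 - s) + ENNReal.ofReal (z.2 - z.1 - s)) ∂volume := by
      intro z
      rw [← rep hp1 (z.1 - z.2)]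
      simp only [neg_sub]
    have hmeas : Measurable (fun w : (ℝ × ℝ) × ℝ =>
        ENNReal.ofReal (p * (p-1) * w.2 ^ (p-2)) *
          (ENNReal.ofReal (w.1.1 - w.1.2 - w.2) + ENNReal.ofReal (w.1.2 - w.1.1 - w.2))) := by
      apply Measurable.mul (f := fun w : (ℝ × ℝ) × ℝ => ENNReal.ofReal (p * (p-1) * w.2 ^ (p-2)))
        (g := fun w : (ℝ × ℝ) × ℝ =>
          ENNReal.ofReal (w.1.1 - w.1.2 - w.2) + ENNReal.ofReal (w.1.2 - w.1.1 - w.2))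
      · exact (w_measurable p).comp measurable_snd
      · exact ((((measurable_fst.fst.sub measurable_fst.snd).sub
          measurable_snd).ennreal_ofReal)).add
          ((((measurable_fst.snd.sub measurable_fst.fst).sub measurable_snd)).ennreal_ofReal)
    have key : ∀ (ρ : Measure (ℝ × ℝ)), IsProbabilityMeasure ρ →
        ∫⁻ z, ENNReal.ofReal (|z.1 - z.2| ^ p) ∂ρ
          = ∫⁻ s in Ioi (0:ℝ), ENNReal.ofReal (p * (p-1) * s ^ (p-2)) *
            ((∫⁻ z : ℝ × ℝ, ENNReal.ofReal (z.1 - z.2 - s) ∂ρ)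
              + ∫⁻ z : ℝ × ℝ, ENNReal.ofReal (z.2 - z.1 - s) ∂ρ) ∂volume := by
      intro ρ hρ
      calc ∫⁻ z, ENNReal.ofReal (|z.1 - z.2| ^ p) ∂ρ
          = ∫⁻ z, (∫⁻ s in Ioi (0:ℝ), ENNReal.ofReal (p * (p-1) * s ^ (p-2)) *
              (ENNReal.ofReal (z.1 - z.2 - s) + ENNReal.ofReal (z.2 - z.1 - s)) ∂volume) ∂ρ :=
            lintegral_congr hrep
        _ = ∫⁻ s in Ioi (0:ℝ), ∫⁻ z, ENNReal.ofReal (p * (p-1) * s ^ (p-2)) *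
              (ENNReal.ofReal (z.1 - z.2 - s) + ENNReal.ofReal (z.2 - z.1 - s)) ∂ρ ∂volume :=
            lintegral_lintegral_swap hmeas.aemeasurable
        _ = ∫⁻ s in Ioi (0:ℝ), ENNReal.ofReal (p * (p-1) * s ^ (p-2)) *
              ((∫⁻ z : ℝ × ℝ, ENNReal.ofReal (z.1 - z.2 - s) ∂ρ)
                + ∫⁻ z : ℝ × ℝ, ENNReal.ofReal (z.2 - z.1 - s) ∂ρ) ∂volume := by
            apply lintegral_congr
            intro s
            rw [lintegral_const_mul _ (inner_measurable s),
              lintegral_add_left (by fun_prop)]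
    rw [key γ inferInstance, key (gstar μ ν) inferInstance]
    apply lintegral_mono
    intro s
    apply mul_le_mul_right
    exact add_le_add (A_ge γ h1 h2 s) (B_ge γ h1 h2 s)

end LCompare

section Finite
variable {μ ν : Measure ℝ} [IsProbabilityMeasure μ] [IsProbabilityMeasure ν]

lemma cost_measurable (p : ℝ) : Measurable (fun z : ℝ × ℝ => |z.1 - z.2| ^ p) :=
  ((measurable_fst.sub measurable_snd).abs).pow_const p

lemma abs_rpow_lintegral_lt_top {p : ℝ} (ρ : Measure ℝ)
    (hρ : Integrable (fun x => |x| ^ p) ρ) :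
    ∫⁻ x, ENNReal.ofReal (|x| ^ p) ∂ρ < ⊤ := by
  rw [← hasFiniteIntegral_iff_ofReal
    (Filter.Eventually.of_forall fun x => Real.rpow_nonneg (abs_nonneg x) p)]
  exact hρ.2

lemma rpow_sub_le {p a b : ℝ} (hp : 0 ≤ p) :
    |a - b| ^ p ≤ 2 ^ p * (|a| ^ p + |b| ^ p) := by
  have h1 : |a - b| ≤ |a| + |b| := abs_sub a b
  have h2 : |a| + |b| ≤ 2 * max |a| |b| := by
    rcases le_total |a| |b| with h | h
    · rw [max_eq_right h]; linarith
    · rw [max_eq_left h]; linarith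
  have h3 : |a - b| ^ p ≤ (2 * max |a| |b|) ^ p :=
    Real.rpow_le_rpow (abs_nonneg _) (le_trans h1 h2) hp
  have h4 : (2 * max |a| |b|) ^ p = 2 ^ p * (max |a| |b|) ^ p :=
    Real.mul_rpow (by norm_num) (le_max_of_le_left (abs_nonneg a))
  have h5 : (max |a| |b|) ^ p ≤ |a| ^ p + |b| ^ p := by
    rcases le_total |a| |b| with h | h
    · rw [max_eq_right h]
      nlinarith [Real.rpow_nonneg (abs_nonneg a) p]
    · rw [max_eq_left h]
      nlinarith [Real.rpow_nonneg (abs_nonneg b) p]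
  calc |a - b| ^ p ≤ 2 ^ p * (max |a| |b|) ^ p := by rw [← h4]; exact h3
    _ ≤ 2 ^ p * (|a| ^ p + |b| ^ p) := by
        apply mul_le_mul_of_nonneg_left h5 (Real.rpow_nonneg (by norm_num) p)

lemma L_lt_top {p : ℝ} (hp : 1 ≤ p) (γ : Measure (ℝ × ℝ)) [IsProbabilityMeasure γ]
    (h1 : γ.map Prod.fst = μ) (h2 : γ.map Prod.snd = ν)
    (hμ : Integrable (fun x => |x| ^ p) μ) (hν : Integrable (fun x => |x| ^ p) ν) :
    ∫⁻ z, ENNReal.ofReal (|z.1 - z.2| ^ p) ∂γ < ⊤ := by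
  have hp0 : (0:ℝ) ≤ p := by linarith
  have hpt : ∀ z : ℝ × ℝ, ENNReal.ofReal (|z.1 - z.2| ^ p)
      ≤ ENNReal.ofReal (2 ^ p) * (ENNReal.ofReal (|z.1| ^ p) + ENNReal.ofReal (|z.2| ^ p)) := by
    intro z
    rw [← ENNReal.ofReal_add (Real.rpow_nonneg (abs_nonneg _) p)
        (Real.rpow_nonneg (abs_nonneg _) p),
      ← ENNReal.ofReal_mul (Real.rpow_nonneg (by norm_num) p)]
    exact ENNReal.ofReal_le_ofReal (rpow_sub_le hp0)
  calc ∫⁻ z, ENNReal.ofReal (|z.1 - z.2| ^ p) ∂γ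
      ≤ ∫⁻ z : ℝ × ℝ, ENNReal.ofReal (2 ^ p) *
          (ENNReal.ofReal (|z.1| ^ p) + ENNReal.ofReal (|z.2| ^ p)) ∂γ :=
        lintegral_mono hpt
    _ = ENNReal.ofReal (2 ^ p) * ((∫⁻ z : ℝ × ℝ, ENNReal.ofReal (|z.1| ^ p) ∂γ)
          + ∫⁻ z : ℝ × ℝ, ENNReal.ofReal (|z.2| ^ p) ∂γ) := by
        rw [lintegral_const_mul _ (by
          exact ((measurable_fst.abs.pow_const p).ennreal_ofReal).add
            ((measurable_snd.abs.pow_const p).ennreal_ofReal)),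
          lintegral_add_left ((measurable_fst.abs.pow_const p).ennreal_ofReal)]
    _ < ⊤ := by
        have hm1 : ∫⁻ z : ℝ × ℝ, ENNReal.ofReal (|z.1| ^ p) ∂γ
            = ∫⁻ x, ENNReal.ofReal (|x| ^ p) ∂μ := by
          rw [← h1, lintegral_map (f := fun x : ℝ => ENNReal.ofReal (|x| ^ p))
            (by exact (measurable_id.abs.pow_const p).ennreal_ofReal) measurable_fst]
        have hm2 : ∫⁻ z : ℝ × ℝ, ENNReal.ofReal (|z.2| ^ p) ∂γ
            = ∫⁻ x, ENNReal.ofReal (|x| ^ p) ∂ν := by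
          rw [← h2, lintegral_map (f := fun x : ℝ => ENNReal.ofReal (|x| ^ p))
            (by exact (measurable_id.abs.pow_const p).ennreal_ofReal) measurable_snd]
        rw [hm1, hm2]
        exact ENNReal.mul_lt_top ENNReal.ofReal_lt_top
          (ENNReal.add_lt_top.2 ⟨abs_rpow_lintegral_lt_top μ hμ,
            abs_rpow_lintegral_lt_top ν hν⟩)

end Finite

end WassAux

/-- Closed form of the `p`-Wasserstein distance on `ℝ`: its `p`-th power is the
integral over `(0,1)` of the `p`-th power of the distance between the quantile
functions. -/
theorem wasserstein_pow_eq_integral_quantile (p : ℝ) (hp : 1 ≤ p)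
    (μ ν : Measure ℝ) [IsProbabilityMeasure μ] [IsProbabilityMeasure ν]
    (hμ : Integrable (fun x => |x| ^ p) μ) (hν : Integrable (fun x => |x| ^ p) ν) :
    wassersteinDist (fun a b => |a - b|) p μ ν ^ p
      = ∫ t in Ioo (0 : ℝ) 1, |quantile μ t - quantile ν t| ^ p := by
  classical
  set I : ℝ := ∫ t in Ioo (0 : ℝ) 1, |quantile μ t - quantile ν t| ^ p with hI
  have hp0 : p ≠ 0 := by intro h; rw [h] at hp; norm_num at hp
  -- bridge between quantile and Q
  have hQI : I = ∫ t in Ioo (0 : ℝ) 1, |WassAux.Q μ t - WassAux.Q ν t| ^ p := by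
    apply setIntegral_congr_fun measurableSet_Ioo
    intro t ht
    show |quantile μ t - quantile ν t| ^ p = |WassAux.Q μ t - WassAux.Q ν t| ^ p
    rw [WassAux.Q_eq_on ht, WassAux.Q_eq_on ht]
  have hQmeas : Measurable (fun t : ℝ => |WassAux.Q μ t - WassAux.Q ν t| ^ p) :=
    (((WassAux.measurable_Q μ).sub (WassAux.measurable_Q ν)).abs).pow_const p
  set Lstar : ℝ≥0∞ := ∫⁻ t in Ioo (0:ℝ) 1, ENNReal.ofReal (|WassAux.Q μ t - WassAux.Q ν t| ^ p)
    with hLstar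
  have hIL : I = Lstar.toReal := by
    rw [hQI, hLstar]
    exact integral_eq_lintegral_of_nonneg_ae
      (Filter.Eventually.of_forall fun t => Real.rpow_nonneg (abs_nonneg _) p)
      hQmeas.aestronglyMeasurable
  have hLgstar : ∫⁻ z, ENNReal.ofReal (|z.1 - z.2| ^ p) ∂(WassAux.gstar μ ν) = Lstar := by
    rw [WassAux.gstar, lintegral_map ((WassAux.cost_measurable p).ennreal_ofReal)
      (WassAux.measurable_T μ ν)]
    rfl
  have hIcost : I = ∫ z : ℝ × ℝ, |z.1 - z.2| ^ p ∂(WassAux.gstar μ ν) := by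
    rw [WassAux.gstar, integral_map (WassAux.measurable_T μ ν).aemeasurable
      (WassAux.cost_measurable p).aestronglyMeasurable]
    exact hQI
  have hmem : I ∈ { c : ℝ | ∃ γ : Measure (ℝ × ℝ), IsProbabilityMeasure γ ∧ IsCoupling γ μ ν ∧
      c = ∫ z, (fun a b => |a - b|) z.1 z.2 ^ p ∂γ } := by
    refine ⟨WassAux.gstar μ ν, inferInstance,
      ⟨(WassAux.isCoupling_gstar μ ν).1, (WassAux.isCoupling_gstar μ ν).2⟩, ?_⟩
    simpa using hIcost
  have hlb : ∀ c ∈ { c : ℝ | ∃ γ : Measure (ℝ × ℝ), IsProbabilityMeasure γ ∧ IsCoupling γ μ ν ∧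
      c = ∫ z, (fun a b => |a - b|) z.1 z.2 ^ p ∂γ }, I ≤ c := by
    rintro c ⟨γ, hγp, ⟨hc1, hc2⟩, rfl⟩
    have hγeq : ∫ z : ℝ × ℝ, (fun a b => |a - b|) z.1 z.2 ^ p ∂γ
        = (∫⁻ z, ENNReal.ofReal (|z.1 - z.2| ^ p) ∂γ).toReal := by
      exact integral_eq_lintegral_of_nonneg_ae
        (Filter.Eventually.of_forall fun z => Real.rpow_nonneg (abs_nonneg _) p)
        (WassAux.cost_measurable p).aestronglyMeasurable
    rw [hγeq, hIL]
    apply ENNReal.toReal_mono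
    · exact (WassAux.L_lt_top hp γ hc1 hc2 hμ hν).ne
    · rw [← hLgstar]
      exact WassAux.L_ge hp γ hc1 hc2
  have hsInf : sInf { c : ℝ | ∃ γ : Measure (ℝ × ℝ), IsProbabilityMeasure γ ∧ IsCoupling γ μ ν ∧
      c = ∫ z, (fun a b => |a - b|) z.1 z.2 ^ p ∂γ } = I :=
    IsLeast.csInf_eq ⟨hmem, hlb⟩
  have hI0 : 0 ≤ I := by rw [hIL]; exact ENNReal.toReal_nonneg
  rw [wassersteinDist, hsInf, ← Real.rpow_mul hI0, one_div_mul_cancel hp0, Real.rpow_one]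
end
end

section
/- Kantorovich–Rubinstein duality: for Borel probability measures μ and ν on a compact metric space X, the 1-Wasserstein (Earth-Mover) distance satisfies W₁(μ, ν) = sup { ∫ g dμ − ∫ g dν : g : X → ℝ is 1-Lipschitz }. -/
open MeasureTheory Measure Set

noncomputable section

/-!
Weak duality is the bound `g x - g y ≤ dist x y` integrated against a coupling.

For the converse, `dualCost μ ν f` is the value of the dual transport problem with gain `f`:
the infimum of `∫ g dμ + ∫ h dν` over continuous `g, h` with `f (x, y) ≤ g x + h y`. It is
sublinear in `f`, so Hahn–Banach gives a linear `Λ ≤ dualCost μ ν` that agrees with it at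
`-dist`. Domination makes `Λ` positive with `Λ (g ∘ fst + h ∘ snd) = ∫ g dμ + ∫ h dν`, so by
Riesz–Markov–Kakutani `Λ` is integration against a coupling `γ`. If `-dist x y ≤ g x + h y`,
the inf-convolution `ψ x = ⨅ y, h y + dist x y` is 1-Lipschitz and squeezed between `-g` and
`h`; hence `dualCost μ ν (-dist)` is at least minus the supremum `S` of the right-hand side, and
`∫ dist dγ = -Λ (-dist) ≤ S`. In particular the infimum defining `W₁` is attained.
-/

open scoped BoundedContinuousFunction CompactlySupported

section HahnBanach

variable {E : Type*} [AddCommGroup E] [Module ℝ E]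

theorem exists_linearMap_le_sublinear_eq (N : E → ℝ)
    (N_hom : ∀ c : ℝ, 0 < c → ∀ x, N (c • x) = c * N x) (N_add : ∀ x y, N (x + y) ≤ N x + N y)
    (v : E) : ∃ Λ : E →ₗ[ℝ] ℝ, (∀ x, Λ x ≤ N x) ∧ Λ v = N v := by
  have N_zero : N 0 = 0 := by linarith [show N 0 = 2 * N 0 by simpa using N_hom 2 two_pos 0]
  have N_smul_ge : ∀ c : ℝ, c * N v ≤ N (c • v) := by
    intro c
    rcases lt_trichotomy c 0 with hc | rfl | hc
    · have h := N_add (c • v) ((-c) • v)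
      rw [← add_smul, add_neg_cancel, zero_smul, N_zero, N_hom _ (neg_pos.2 hc)] at h
      linarith
    · simp [N_zero]
    · exact (N_hom c hc v).ge
  let f := LinearPMap.mkSpanSingleton' (σ := RingHom.id ℝ) v (N v) fun c hcv => by
    rcases smul_eq_zero.1 hcv with rfl | rfl
    · simp
    · simp [N_zero]
  obtain ⟨Λ, hΛf, hΛN⟩ := exists_extension_of_le_sublinear f N N_hom N_add (by
    rintro ⟨x, hx⟩
    obtain ⟨c, rfl⟩ := Submodule.mem_span_singleton.1 hx
    rw [LinearPMap.mkSpanSingleton'_apply]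
    exact N_smul_ge c)
  exact ⟨Λ, hΛN, (hΛf ⟨v, Submodule.mem_span_singleton_self v⟩).trans
    (LinearPMap.mkSpanSingleton'_apply_self _ _ _ _)⟩

end HahnBanach

theorem exists_lipschitzWith_one_between {X : Type*} [PseudoMetricSpace X] [Nonempty X]
    {u w : X → ℝ} (hw : BddBelow (range w)) (huw : ∀ x y, u x ≤ w y + dist x y) :
    ∃ ψ : X → ℝ, LipschitzWith 1 ψ ∧ u ≤ ψ ∧ ψ ≤ w := by
  obtain ⟨m, hm⟩ := hw
  have hbdd : ∀ x, BddBelow (range fun y => w y + dist x y) := fun x =>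
    ⟨m, by rintro _ ⟨y, rfl⟩; exact (hm ⟨y, rfl⟩).trans (le_add_of_nonneg_right dist_nonneg)⟩
  refine ⟨fun x => ⨅ y, (w y + dist x y), LipschitzWith.of_le_add_mul 1 fun x x' => ?_,
    fun x => le_ciInf (huw x), fun x => by simpa using ciInf_le (hbdd x) x⟩
  rw [NNReal.coe_one, one_mul, ← _root_.sub_le_iff_le_add]
  refine le_ciInf fun y => ?_
  linarith [ciInf_le (hbdd x) y, dist_triangle x x' y]

theorem Continuous.integrable_of_compactSpace {Y : Type*} [TopologicalSpace Y] [CompactSpace Y]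
    [MeasurableSpace Y] [OpensMeasurableSpace Y] {μ : Measure Y} [IsFiniteMeasure μ]
    {f : Y → ℝ} (hf : Continuous f) : Integrable f μ :=
  (BoundedContinuousFunction.mkOfCompact ⟨f, hf⟩).integrable μ

section Coupling

variable {X Y : Type*} [MeasurableSpace X] [MeasurableSpace Y]
  {γ : Measure (X × Y)} {μ : Measure X} {ν : Measure Y}

theorem isCoupling_prod [IsProbabilityMeasure μ] [IsProbabilityMeasure ν] :
    IsCoupling (μ.prod ν) μ ν := by
  simp [IsCoupling]

namespace IsCoupling

theorem isProbabilityMeasure [IsProbabilityMeasure μ] (hγ : IsCoupling γ μ ν) :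
    IsProbabilityMeasure γ := by
  obtain ⟨rfl, -⟩ := hγ
  exact ⟨by simpa [Measure.map_apply measurable_fst MeasurableSet.univ]
    using measure_univ (μ := γ.map Prod.fst)⟩

theorem integral_comp_fst (hγ : IsCoupling γ μ ν) {g : X → ℝ} (hg : AEStronglyMeasurable g μ) :
    ∫ z, g z.1 ∂γ = ∫ x, g x ∂μ := by
  obtain ⟨rfl, -⟩ := hγ
  exact (integral_map measurable_fst.aemeasurable hg).symm

theorem integral_comp_snd (hγ : IsCoupling γ μ ν) {h : Y → ℝ} (hh : AEStronglyMeasurable h ν) :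
    ∫ z, h z.2 ∂γ = ∫ y, h y ∂ν := by
  obtain ⟨-, rfl⟩ := hγ
  exact (integral_map measurable_snd.aemeasurable hh).symm

theorem of_forall_integral_eq [TopologicalSpace X] [HasOuterApproxClosed X] [BorelSpace X]
    [TopologicalSpace Y] [HasOuterApproxClosed Y] [BorelSpace Y]
    [IsFiniteMeasure γ] [IsFiniteMeasure μ] [IsFiniteMeasure ν]
    (h₁ : ∀ g : X →ᵇ ℝ, ∫ z, g z.1 ∂γ = ∫ x, g x ∂μ)
    (h₂ : ∀ h : Y →ᵇ ℝ, ∫ z, h z.2 ∂γ = ∫ y, h y ∂ν) : IsCoupling γ μ ν :=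
  ⟨ext_of_forall_integral_eq_of_IsFiniteMeasure fun g => by
      rw [integral_map measurable_fst.aemeasurable g.continuous.measurable.aestronglyMeasurable,
        h₁],
    ext_of_forall_integral_eq_of_IsFiniteMeasure fun h => by
      rw [integral_map measurable_snd.aemeasurable h.continuous.measurable.aestronglyMeasurable,
        h₂]⟩

variable [PseudoMetricSpace X] [CompactSpace X] [BorelSpace X]
  [PseudoMetricSpace Y] [CompactSpace Y] [BorelSpace Y] [IsFiniteMeasure γ]

theorem integral_le_of_le_add (hγ : IsCoupling γ μ ν) {f : X × Y → ℝ} {g : X → ℝ} {h : Y → ℝ}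
    (hf : Continuous f) (hg : Continuous g) (hh : Continuous h)
    (hfgh : ∀ x y, f (x, y) ≤ g x + h y) :
    ∫ z, f z ∂γ ≤ ∫ x, g x ∂μ + ∫ y, h y ∂ν := by
  have hg' : Integrable (fun z : X × Y => g z.1) γ :=
    (hg.comp continuous_fst).integrable_of_compactSpace
  have hh' : Integrable (fun z : X × Y => h z.2) γ :=
    (hh.comp continuous_snd).integrable_of_compactSpace
  rw [← hγ.integral_comp_fst hg.aestronglyMeasurable,
    ← hγ.integral_comp_snd hh.aestronglyMeasurable, ← integral_add hg' hh']
  exact integral_mono hf.integrable_of_compactSpace (hg'.add hh') fun z => hfgh z.1 z.2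

end IsCoupling

end Coupling

section CompactMetric

variable {X : Type*} [MetricSpace X] [CompactSpace X] [MeasurableSpace X]

theorem IsCoupling.integral_sub_integral_le_integral_dist [BorelSpace X] {μ ν : Measure X}
    {γ : Measure (X × X)} [IsFiniteMeasure γ] (hγ : IsCoupling γ μ ν) {g : X → ℝ}
    (hg : LipschitzWith 1 g) : ∫ x, g x ∂μ - ∫ x, g x ∂ν ≤ ∫ z, dist z.1 z.2 ∂γ := by
  have h := hγ.integral_le_of_le_add continuous_dist.neg hg.continuous.neg hg.continuous
    fun x y => by
      have := (le_abs_self (g x - g y)).trans (by simpa [Real.dist_eq] using hg.dist_le_mul x y)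
      simp only [Pi.neg_apply]
      linarith
  simp only [Pi.neg_apply, integral_neg] at h
  linarith

def continuousDist : C(X × X, ℝ) := ⟨fun z => dist z.1 z.2, continuous_dist⟩

section DualCost

variable (μ ν : Measure X)

def dualCost (f : C(X × X, ℝ)) : ℝ :=
  sInf {c | ∃ g h : C(X, ℝ), (∀ x y, f (x, y) ≤ g x + h y) ∧ c = ∫ x, g x ∂μ + ∫ y, h y ∂ν}

variable {μ ν}

theorem le_dualCost {f : C(X × X, ℝ)} {a : ℝ}
    (ha : ∀ g h : C(X, ℝ), (∀ x y, f (x, y) ≤ g x + h y) → a ≤ ∫ x, g x ∂μ + ∫ y, h y ∂ν) :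
    a ≤ dualCost μ ν f :=
  le_csInf ⟨_, .const X ‖f‖, 0, fun x y => by
      simpa using (le_abs_self _).trans (f.norm_coe_le_norm (x, y)), rfl⟩
    (by rintro _ ⟨g, h, hfgh, rfl⟩; exact ha g h hfgh)

variable [BorelSpace X] [IsProbabilityMeasure μ] [IsProbabilityMeasure ν]

theorem dualCost_le {f : C(X × X, ℝ)} (g h : C(X, ℝ)) (hfgh : ∀ x y, f (x, y) ≤ g x + h y) :
    dualCost μ ν f ≤ ∫ x, g x ∂μ + ∫ y, h y ∂ν :=
  csInf_le ⟨∫ z, f z ∂(μ.prod ν), by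
    rintro _ ⟨g, h, hfgh, rfl⟩
    exact isCoupling_prod.integral_le_of_le_add f.continuous g.continuous h.continuous hfgh⟩
    ⟨g, h, hfgh, rfl⟩

theorem dualCost_add_le (f₁ f₂ : C(X × X, ℝ)) :
    dualCost μ ν (f₁ + f₂) ≤ dualCost μ ν f₁ + dualCost μ ν f₂ := by
  refine _root_.sub_le_iff_le_add.1 (le_dualCost fun g₁ h₁ hf₁ =>
    sub_le_comm.1 (le_dualCost fun g₂ h₂ hf₂ => ?_))
  have := dualCost_le (μ := μ) (ν := ν) (f := f₁ + f₂) (g₁ + g₂) (h₁ + h₂) fun x y => by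
    simpa [add_add_add_comm] using add_le_add (hf₁ x y) (hf₂ x y)
  simp only [ContinuousMap.coe_add, Pi.add_apply] at this
  rw [integral_add g₁.continuous.integrable_of_compactSpace
      g₂.continuous.integrable_of_compactSpace,
    integral_add h₁.continuous.integrable_of_compactSpace
      h₂.continuous.integrable_of_compactSpace] at this
  linarith

theorem dualCost_smul_le {c : ℝ} (hc : 0 < c) (f : C(X × X, ℝ)) :
    dualCost μ ν (c • f) ≤ c * dualCost μ ν f := by
  rw [← div_le_iff₀' hc]
  refine le_dualCost fun g h hfgh => (div_le_iff₀' hc).2 ?_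
  calc dualCost μ ν (c • f) ≤ ∫ x, (c • g) x ∂μ + ∫ y, (c • h) y ∂ν :=
        dualCost_le _ _ fun x y => by
          simpa [mul_add] using mul_le_mul_of_nonneg_left (hfgh x y) hc.le
    _ = c * (∫ x, g x ∂μ + ∫ y, h y ∂ν) := by
        simp only [ContinuousMap.coe_smul, Pi.smul_apply, smul_eq_mul, integral_const_mul, mul_add]

theorem dualCost_smul {c : ℝ} (hc : 0 < c) (f : C(X × X, ℝ)) :
    dualCost μ ν (c • f) = c * dualCost μ ν f := by
  refine le_antisymm (dualCost_smul_le hc f) ((le_inv_mul_iff₀ hc).1 ?_)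
  simpa [inv_smul_smul₀ hc.ne'] using dualCost_smul_le (μ := μ) (ν := ν) (inv_pos.2 hc) (c • f)

theorem neg_le_dualCost_neg_continuousDist {a : ℝ}
    (ha : ∀ ψ : X → ℝ, LipschitzWith 1 ψ → ∫ x, ψ x ∂μ - ∫ x, ψ x ∂ν ≤ a) :
    -a ≤ dualCost μ ν (-continuousDist) := by
  have : Nonempty X := nonempty_of_isProbabilityMeasure μ
  refine le_dualCost fun g h hgh => ?_
  obtain ⟨ψ, hψ, hgψ, hψh⟩ := exists_lipschitzWith_one_between (u := -g) (w := h)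
    (isCompact_range h.continuous).bddBelow fun x y => by
      have := hgh x y
      simp only [continuousDist, ContinuousMap.neg_apply, ContinuousMap.coe_mk] at this
      simp only [Pi.neg_apply, ContinuousMap.coe_neg]
      linarith
  have hψμ : ∫ x, -g x ∂μ ≤ ∫ x, ψ x ∂μ := integral_mono
    g.continuous.neg.integrable_of_compactSpace hψ.continuous.integrable_of_compactSpace hgψ
  have hψν : ∫ x, ψ x ∂ν ≤ ∫ x, h x ∂ν := integral_mono
    hψ.continuous.integrable_of_compactSpace h.continuous.integrable_of_compactSpace hψh
  rw [integral_neg] at hψμ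
  linarith [ha ψ hψ]

end DualCost

section Functional

variable [BorelSpace X] {μ ν : Measure X} [IsProbabilityMeasure μ] [IsProbabilityMeasure ν]
  {Λ : C(X × X, ℝ) →ₗ[ℝ] ℝ}

theorem map_nonneg_of_le_dualCost (hΛ : ∀ f, Λ f ≤ dualCost μ ν f) {f : C(X × X, ℝ)}
    (hf : 0 ≤ f) : 0 ≤ Λ f := by
  have := (hΛ (-f)).trans (dualCost_le 0 0 fun x y => by simpa using hf (x, y))
  simpa using this

theorem map_comp_fst_add_comp_snd_of_le_dualCost (hΛ : ∀ f, Λ f ≤ dualCost μ ν f)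
    (g h : C(X, ℝ)) :
    Λ (g.comp .fst + h.comp .snd) = ∫ x, g x ∂μ + ∫ y, h y ∂ν := by
  refine le_antisymm ((hΛ _).trans (dualCost_le g h fun x y => le_rfl)) ?_
  have := (hΛ (-(g.comp .fst + h.comp .snd))).trans (dualCost_le (-g) (-h) fun x y => by simp)
  simp only [map_neg, ContinuousMap.coe_neg, Pi.neg_apply, integral_neg] at this
  linarith

theorem exists_isCoupling_integral_eq_of_le_dualCost (hΛ : ∀ f, Λ f ≤ dualCost μ ν f) :
    ∃ γ : Measure (X × X), IsCoupling γ μ ν ∧ ∀ f : C(X × X, ℝ), ∫ z, f z ∂γ = Λ f := by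
  let Λc : C_c(X × X, ℝ) →ₚ[ℝ] ℝ := PositiveLinearMap.mk₀
    { toFun := fun f => Λ f, map_add' := fun f g => Λ.map_add f g,
      map_smul' := fun c f => Λ.map_smul c f }
    fun f hf => map_nonneg_of_le_dualCost hΛ hf
  have hγ (f : C(X × X, ℝ)) : ∫ z, f z ∂(RealRMK.rieszMeasure Λc) = Λ f :=
    RealRMK.integral_rieszMeasure Λc (CompactlySupportedContinuousMap.continuousMapEquiv f)
  refine ⟨RealRMK.rieszMeasure Λc,
    IsCoupling.of_forall_integral_eq (fun g => ?_) (fun h => ?_), hγ⟩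
  · simpa using (hγ _).trans (map_comp_fst_add_comp_snd_of_le_dualCost hΛ g 0)
  · simpa using (hγ _).trans (map_comp_fst_add_comp_snd_of_le_dualCost hΛ 0 h)

end Functional

theorem exists_isCoupling_integral_dist_le [BorelSpace X] (μ ν : Measure X)
    [IsProbabilityMeasure μ] [IsProbabilityMeasure ν] {a : ℝ}
    (ha : ∀ g : X → ℝ, LipschitzWith 1 g → ∫ x, g x ∂μ - ∫ x, g x ∂ν ≤ a) :
    ∃ γ : Measure (X × X), IsProbabilityMeasure γ ∧ IsCoupling γ μ ν ∧
      ∫ z, dist z.1 z.2 ∂γ ≤ a := by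
  obtain ⟨Λ, hΛ, hΛdist⟩ := exists_linearMap_le_sublinear_eq (dualCost μ ν)
    (fun _ hc f => dualCost_smul hc f) dualCost_add_le (-continuousDist)
  obtain ⟨γ, hγ, hγΛ⟩ := exists_isCoupling_integral_eq_of_le_dualCost hΛ
  refine ⟨γ, hγ.isProbabilityMeasure, hγ, ?_⟩
  have := neg_le_dualCost_neg_continuousDist ha
  rw [← hΛdist, map_neg] at this
  have hdist : ∫ z, dist z.1 z.2 ∂γ = Λ continuousDist := hγΛ continuousDist
  linarith

end CompactMetric

/-- Kantorovich–Rubinstein duality on a compact metric space: the `1`-Wasserstein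
(Earth-Mover) distance equals the supremum of `∫ g dμ - ∫ g dν` over all
`1`-Lipschitz functions `g`. -/
theorem kantorovich_rubinstein {X : Type*} [MetricSpace X] [CompactSpace X]
    [MeasurableSpace X] [BorelSpace X]
    (μ ν : Measure X) [IsProbabilityMeasure μ] [IsProbabilityMeasure ν] :
    wassersteinDist (fun x y => dist x y) 1 μ ν
      = sSup { r : ℝ | ∃ g : X → ℝ, LipschitzWith 1 g ∧
          r = (∫ x, g x ∂μ) - ∫ x, g x ∂ν } := by
  have hbdd : BddAbove { r : ℝ | ∃ g : X → ℝ, LipschitzWith 1 g ∧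
      r = (∫ x, g x ∂μ) - ∫ x, g x ∂ν } := ⟨∫ z, dist z.1 z.2 ∂(μ.prod ν), by
    rintro _ ⟨g, hg, rfl⟩
    exact (isCoupling_prod (μ := μ) (ν := ν)).integral_sub_integral_le_integral_dist hg⟩
  obtain ⟨γ, hγ, hγμν, hcost⟩ := exists_isCoupling_integral_dist_le μ ν fun g hg =>
    le_csSup hbdd ⟨g, hg, rfl⟩
  simp only [wassersteinDist, Real.rpow_one, div_one]
  apply le_antisymm
  · refine (csInf_le ⟨0, ?_⟩ ?_).trans hcost
    · rintro _ ⟨γ, -, -, rfl⟩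
      exact integral_nonneg fun z => dist_nonneg
    · exact ⟨γ, hγ, hγμν, rfl⟩
  · refine csSup_le ⟨_, fun _ => 0, (LipschitzWith.const 0).weaken zero_le_one, rfl⟩ ?_
    rintro _ ⟨g, hg, rfl⟩
    refine le_csInf ⟨_, μ.prod ν, inferInstance, isCoupling_prod, rfl⟩ ?_
    rintro _ ⟨γ, hγ, hγμν, rfl⟩
    exact hγμν.integral_sub_integral_le_integral_dist hg
end
end

section
/- Optimal GAN discriminator: let μ_r and μ_g be probability measures on ℝ^n that are absolutely continuous with respect to a common σ-finite reference measure λ, with densities p_r and p_g. Then among all measurable functions D : ℝ^n → (0, 1), the functional V(D) = ∫ log(D(x)) p_r(x) dλ(x) + ∫ log(1 − D(x)) p_g(x) dλ(x) is maximized by D*(x) = p_r(x) / (p_r(x) + p_g(x)) (on the set where p_r(x) + p_g(x) > 0), i.e. V(D) ≤ V(D*) for all such D. -/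
open MeasureTheory Measure Set

noncomputable section

lemma gan_pointwise (a b t d : ℝ) (ha : 0 ≤ a) (hb : 0 ≤ b)
    (ht0 : 0 < t) (ht1 : t < 1)
    (hd : 0 < a + b → d = a / (a + b)) :
    Real.log t * a + Real.log (1 - t) * b ≤ Real.log d * a + Real.log (1 - d) * b := by
  rcases eq_or_lt_of_le (add_nonneg ha hb) with hab | hab
  · have ha0 : a = 0 := by linarith
    have hb0 : b = 0 := by linarith
    simp [ha0, hb0]
  · have hd' := hd hab
    have h1d : 1 - d = b / (a + b) := by
      rw [hd']; field_simp; ring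
    rcases eq_or_lt_of_le ha with ha0 | ha0
    · have hdz : d = 0 := by rw [hd', ← ha0]; simp
      have hlt : Real.log (1 - t) ≤ 0 := Real.log_nonpos (by linarith) (by linarith)
      have : Real.log (1 - t) * b ≤ 0 := mul_nonpos_of_nonpos_of_nonneg hlt hb
      simp [hdz, ← ha0]
      linarith
    rcases eq_or_lt_of_le hb with hb0 | hb0
    · have hdz : d = 1 := by rw [hd', ← hb0]; field_simp; ring
      have hlt : Real.log t ≤ 0 := Real.log_nonpos (le_of_lt ht0) (le_of_lt ht1)
      have : Real.log t * a ≤ 0 := mul_nonpos_of_nonpos_of_nonneg hlt ha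
      simp [hdz, ← hb0]
      linarith
    · have hdpos : 0 < d := hd' ▸ div_pos ha0 hab
      have h1dpos : 0 < 1 - d := h1d ▸ div_pos hb0 hab
      have l1 : Real.log t - Real.log d ≤ t / d - 1 := by
        have := Real.log_le_sub_one_of_pos (div_pos ht0 hdpos)
        rwa [Real.log_div (ne_of_gt ht0) (ne_of_gt hdpos)] at this
      have l2 : Real.log (1 - t) - Real.log (1 - d) ≤ (1 - t) / (1 - d) - 1 := by
        have := Real.log_le_sub_one_of_pos (div_pos (show (0:ℝ) < 1 - t by linarith) h1dpos)
        rwa [Real.log_div (ne_of_gt (by linarith : (0:ℝ) < 1 - t)) (ne_of_gt h1dpos)] at this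
      have e1 : a / d = a + b := by rw [hd']; field_simp
      have e2 : b / (1 - d) = a + b := by rw [h1d]; field_simp
      have k1 : a * (Real.log t - Real.log d) ≤ a * (t / d - 1) :=
        mul_le_mul_of_nonneg_left l1 (le_of_lt ha0)
      have k2 : b * (Real.log (1 - t) - Real.log (1 - d)) ≤ b * ((1 - t) / (1 - d) - 1) :=
        mul_le_mul_of_nonneg_left l2 (le_of_lt hb0)
      have m1 : a * (t / d) = t * (a + b) := by rw [← e1]; ring
      have m2 : b * ((1 - t) / (1 - d)) = (1 - t) * (a + b) := by rw [← e2]; ring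
      nlinarith [k1, k2, m1, m2]

/-- Optimality of the GAN discriminator `D*(x) = p_r x / (p_r x + p_g x)`: among all
measurable discriminators `D : ℝ^n → (0,1)`, the GAN value functional
`V(D) = ∫ log (D x) * p_r x ∂λ + ∫ log (1 - D x) * p_g x ∂λ` is maximized at `D*`. -/
theorem gan_optimal_discriminator (n : ℕ)
    (lam : Measure (EuclideanSpace ℝ (Fin n))) [SigmaFinite lam]
    (p_r p_g : EuclideanSpace ℝ (Fin n) → ℝ)
    (hmr : Measurable p_r) (hmg : Measurable p_g)
    (hr0 : ∀ x, 0 ≤ p_r x) (hg0 : ∀ x, 0 ≤ p_g x)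
    (μ_r μ_g : Measure (EuclideanSpace ℝ (Fin n)))
    [IsProbabilityMeasure μ_r] [IsProbabilityMeasure μ_g]
    (hμr : μ_r = lam.withDensity fun x => ENNReal.ofReal (p_r x))
    (hμg : μ_g = lam.withDensity fun x => ENNReal.ofReal (p_g x))
    (Dstar : EuclideanSpace ℝ (Fin n) → ℝ)
    (hDstar : ∀ x, 0 < p_r x + p_g x → Dstar x = p_r x / (p_r x + p_g x))
    (hstar1 : Integrable (fun x => Real.log (Dstar x) * p_r x) lam)
    (hstar2 : Integrable (fun x => Real.log (1 - Dstar x) * p_g x) lam)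
    (D : EuclideanSpace ℝ (Fin n) → ℝ) (hD : Measurable D)
    (hD01 : ∀ x, D x ∈ Ioo (0 : ℝ) 1)
    (hint1 : Integrable (fun x => Real.log (D x) * p_r x) lam)
    (hint2 : Integrable (fun x => Real.log (1 - D x) * p_g x) lam) :
    (∫ x, Real.log (D x) * p_r x ∂lam) + ∫ x, Real.log (1 - D x) * p_g x ∂lam
      ≤ (∫ x, Real.log (Dstar x) * p_r x ∂lam)
        + ∫ x, Real.log (1 - Dstar x) * p_g x ∂lam := by
  rw [← integral_add hint1 hint2, ← integral_add hstar1 hstar2]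
  refine integral_mono (hint1.add hint2) (hstar1.add hstar2) fun x => ?_
  exact gan_pointwise (p_r x) (p_g x) (D x) (Dstar x) (hr0 x) (hg0 x)
    (hD01 x).1 (hD01 x).2 (hDstar x)
end
end

section
/- Value of the GAN objective at the optimal discriminator: let μ_r and μ_g be probability measures on ℝ^n with densities p_r and p_g with respect to a common σ-finite reference measure λ, and let D*(x) = p_r(x)/(p_r(x) + p_g(x)). Then ∫ log(D*(x)) p_r(x) dλ(x) + ∫ log(1 − D*(x)) p_g(x) dλ(x) = −log 4 + 2·JSD(μ_r ‖ μ_g), where JSD denotes the Jensen–Shannon divergence. Consequently, minimizing the GAN objective over the generator with an optimal discriminator is equivalent to minimizing the Jensen–Shannon divergence between P_r and P_g. -/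
open MeasureTheory Measure Set

noncomputable section

/-- The Kullback–Leibler divergence between two probability densities `p` and `q`
with respect to a common reference measure `lam`. -/
def KLDiv {α : Type*} [MeasurableSpace α] (lam : Measure α) (p q : α → ℝ) : ℝ :=
  ∫ x, p x * Real.log (p x / q x) ∂lam

/-- The Jensen–Shannon divergence between two probability densities `p` and `q`
with respect to a common reference measure `lam`. -/
def JSDiv {α : Type*} [MeasurableSpace α] (lam : Measure α) (p q : α → ℝ) : ℝ :=
  (1 / 2) * KLDiv lam p (fun x => (p x + q x) / 2)
    + (1 / 2) * KLDiv lam q (fun x => (p x + q x) / 2)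

lemma density_integral_one {α : Type*} [MeasurableSpace α] (lam : Measure α)
    (p : α → ℝ) (hm : Measurable p) (h0 : ∀ x, 0 ≤ p x)
    (μ : Measure α) [IsProbabilityMeasure μ]
    (hμ : μ = lam.withDensity fun x => ENNReal.ofReal (p x)) :
    Integrable p lam ∧ ∫ x, p x ∂lam = 1 := by
  have hlint : ∫⁻ x, ENNReal.ofReal (p x) ∂lam = 1 := by
    have huniv := measure_univ (μ := μ)
    rw [hμ, withDensity_apply _ MeasurableSet.univ, setLIntegral_univ] at huniv
    exact huniv
  have hint : Integrable p lam := by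
    refine ⟨hm.aestronglyMeasurable, ?_⟩
    rw [hasFiniteIntegral_iff_ofReal (Filter.Eventually.of_forall h0), hlint]
    exact ENNReal.one_lt_top
  refine ⟨hint, ?_⟩
  rw [integral_eq_lintegral_of_nonneg_ae (Filter.Eventually.of_forall h0)
      hm.aestronglyMeasurable, hlint]
  simp

/-- Value of the GAN objective at the optimal discriminator
`D*(x) = p_r x / (p_r x + p_g x)`: it equals `-log 4` plus twice the Jensen–Shannon
divergence between the real distribution `μ_r` and the generator distribution `μ_g`
(expressed via their densities). -/
theorem gan_value_at_optimal_discriminator (n : ℕ)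
    (lam : Measure (EuclideanSpace ℝ (Fin n))) [SigmaFinite lam]
    (p_r p_g : EuclideanSpace ℝ (Fin n) → ℝ)
    (hmr : Measurable p_r) (hmg : Measurable p_g)
    (hr0 : ∀ x, 0 ≤ p_r x) (hg0 : ∀ x, 0 ≤ p_g x)
    (μ_r μ_g : Measure (EuclideanSpace ℝ (Fin n)))
    [IsProbabilityMeasure μ_r] [IsProbabilityMeasure μ_g]
    (hμr : μ_r = lam.withDensity fun x => ENNReal.ofReal (p_r x))
    (hμg : μ_g = lam.withDensity fun x => ENNReal.ofReal (p_g x))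
    (Dstar : EuclideanSpace ℝ (Fin n) → ℝ)
    (hDstar : Dstar = fun x => p_r x / (p_r x + p_g x))
    (h1 : Integrable (fun x => Real.log (Dstar x) * p_r x) lam)
    (h2 : Integrable (fun x => Real.log (1 - Dstar x) * p_g x) lam) :
    (∫ x, Real.log (Dstar x) * p_r x ∂lam) + ∫ x, Real.log (1 - Dstar x) * p_g x ∂lam
      = -Real.log 4 + 2 * JSDiv lam p_r p_g := by
  obtain ⟨hint_r, hone_r⟩ := density_integral_one lam p_r hmr hr0 μ_r hμr
  obtain ⟨hint_g, hone_g⟩ := density_integral_one lam p_g hmg hg0 μ_g hμg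
  subst hDstar
  have key1 : ∀ x, p_r x * Real.log (p_r x / ((p_r x + p_g x) / 2))
      = Real.log (p_r x / (p_r x + p_g x)) * p_r x + Real.log 2 * p_r x := by
    intro x
    rcases eq_or_lt_of_le (hr0 x) with h | h
    · simp [← h]
    · have hsx : 0 < p_r x + p_g x := lt_of_lt_of_le h (le_add_of_nonneg_right (hg0 x))
      have heq : p_r x / ((p_r x + p_g x) / 2) = 2 * (p_r x / (p_r x + p_g x)) := by
        field_simp
      rw [heq, Real.log_mul two_ne_zero (by positivity)]
      ring
  have key2 : ∀ x, p_g x * Real.log (p_g x / ((p_r x + p_g x) / 2))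
      = Real.log (1 - p_r x / (p_r x + p_g x)) * p_g x + Real.log 2 * p_g x := by
    intro x
    rcases eq_or_lt_of_le (hg0 x) with h | h
    · simp [← h]
    · have hsx : 0 < p_r x + p_g x := lt_of_lt_of_le h (le_add_of_nonneg_left (hr0 x))
      have h1d : 1 - p_r x / (p_r x + p_g x) = p_g x / (p_r x + p_g x) := by
        field_simp
        ring
      have heq : p_g x / ((p_r x + p_g x) / 2) = 2 * (p_g x / (p_r x + p_g x)) := by
        field_simp
      rw [h1d, heq, Real.log_mul two_ne_zero (by positivity)]
      ring
  have hK1 : KLDiv lam p_r (fun x => (p_r x + p_g x) / 2)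
      = (∫ x, Real.log (p_r x / (p_r x + p_g x)) * p_r x ∂lam) + Real.log 2 := by
    unfold KLDiv
    calc ∫ x, p_r x * Real.log (p_r x / ((p_r x + p_g x) / 2)) ∂lam
        = ∫ x, (Real.log (p_r x / (p_r x + p_g x)) * p_r x + Real.log 2 * p_r x) ∂lam := by
          exact integral_congr_ae (Filter.Eventually.of_forall key1)
      _ = (∫ x, Real.log (p_r x / (p_r x + p_g x)) * p_r x ∂lam)
            + ∫ x, Real.log 2 * p_r x ∂lam := integral_add h1 (hint_r.const_mul _)
      _ = _ := by rw [integral_const_mul, hone_r, mul_one]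
  have hK2 : KLDiv lam p_g (fun x => (p_r x + p_g x) / 2)
      = (∫ x, Real.log (1 - p_r x / (p_r x + p_g x)) * p_g x ∂lam) + Real.log 2 := by
    unfold KLDiv
    calc ∫ x, p_g x * Real.log (p_g x / ((p_r x + p_g x) / 2)) ∂lam
        = ∫ x, (Real.log (1 - p_r x / (p_r x + p_g x)) * p_g x + Real.log 2 * p_g x) ∂lam := by
          exact integral_congr_ae (Filter.Eventually.of_forall key2)
      _ = (∫ x, Real.log (1 - p_r x / (p_r x + p_g x)) * p_g x ∂lam)
            + ∫ x, Real.log 2 * p_g x ∂lam := integral_add h2 (hint_g.const_mul _)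
      _ = _ := by rw [integral_const_mul, hone_g, mul_one]
  have hlog4 : Real.log 4 = 2 * Real.log 2 := by
    rw [show (4 : ℝ) = 2 * 2 by norm_num, Real.log_mul two_ne_zero two_ne_zero]
    ring
  unfold JSDiv
  rw [hK1, hK2, hlog4]
  ring
end
end
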